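/- arXiv:2509.07760 — 5 statements merged into one kernel-verified Lean document; each statement's English description precedes it below -/
import Mathlib

section
/- Let r ≥ 3 and let D be a digraph on n vertices whose underlying graph is complete s-partite with s ≥ r. If every vertex of D has out-degree strictly greater than ((3r−7)/(3r−4))·n, then D contains a transitive tournament on r vertices. -/
open Finset

set_option maxHeartbeats 1000000 in
private lemma tt_aux (r : ℕ) (hr : 2 ≤ r) :
    ∀ (V : Type u) [Fintype V] (s : ℕ), r ≤ s → ∀ (A : V → V → Prop) (c : V → Fin s),
    Function.Surjective c → (∀ u v : V, (A u v ∨ A v u) ↔ c u ≠ c v) →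
    (∀ v : V, (3 * (r : ℝ) - 7) / (3 * (r : ℝ) - 4) * (Fintype.card V) <
      Nat.card {u : V // A v u}) →
    ∃ f : Fin r → V, Function.Injective f ∧ ∀ i j : Fin r, i < j → A (f i) (f j) := by
  induction r, hr using Nat.le_induction with
  | base =>
    intro V _ s hs A c hcsurj hpartite _
    obtain ⟨u, hu⟩ := hcsurj ⟨0, by omega⟩
    obtain ⟨v, hv⟩ := hcsurj ⟨1, by omega⟩
    have hne : c u ≠ c v := by rw [hu, hv]; simp [Fin.ext_iff]
    have hneuv : u ≠ v := fun h => hne (by rw [h])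
    rcases (hpartite u v).2 hne with h | h
    · refine ⟨![u, v], ?_, ?_⟩
      · intro i j hij; fin_cases i <;> fin_cases j <;> simp_all
      · intro i j hij; fin_cases i <;> fin_cases j <;> first | exact h | omega |
          (exfalso; exact absurd hij (by decide))
    · refine ⟨![v, u], ?_, ?_⟩
      · intro i j hij; fin_cases i <;> fin_cases j <;> simp_all
      · intro i j hij; fin_cases i <;> fin_cases j <;> first | exact h | omega |
          (exfalso; exact absurd hij (by decide))
  | succ r hr ih =>
    intro V _ s hs A c hcsurj hpartite hdeg
    classical
    set n := Fintype.card V with hn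
    have hrR : (2 : ℝ) ≤ (r : ℝ) := by exact_mod_cast hr
    have hb : (0:ℝ) < 3*(r:ℝ) - 1 := by linarith
    set N : V → Finset V := fun v => univ.filter (fun u => A v u) with hN
    have hNcard : ∀ v : V, (Nat.card {u : V // A v u}) = (N v).card := by
      intro v
      rw [Nat.card_eq_fintype_card, hN]
      exact Fintype.card_subtype _
    have hdeg' : ∀ v : V, (3*(r:ℝ) - 4) * n < (3*(r:ℝ) - 1) * (N v).card := by
      intro v
      have h := hdeg v
      rw [hNcard v] at h
      push_cast at h
      have h2 : (3*(r:ℝ) - 4) / (3*(r:ℝ) - 1) * n < (N v).card := by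
        convert h using 3 <;> ring
      rw [div_mul_eq_mul_div, div_lt_iff₀ hb] at h2
      linarith
    have hirr : ∀ v : V, ¬ A v v := by
      intro v hv
      exact ((hpartite v v).1 (Or.inl hv)) rfl
    set P : Fin s → Finset V := fun i => univ.filter (fun u => c u = i) with hP
    have hsum : ∑ i : Fin s, (P i).card = n := by
      rw [hn, ← Finset.card_univ]
      exact (Finset.card_eq_sum_card_fiberwise (fun x _ => mem_univ (c x))).symm
    have hNle : ∀ v : V, (N v).card ≤ n := fun v => (N v).card_le_univ
    have hdisj : ∀ i : Fin s, ∀ x : V, c x = i → Disjoint (P i) (N x) := by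
      intro i x hx
      rw [Finset.disjoint_left]
      intro a ha ha2
      rw [hP] at ha; rw [hN] at ha2
      simp only [mem_filter] at ha ha2
      exact (hpartite x a).1 (Or.inl ha2.2) (by rw [hx, ha.2])
    have hpartsize : ∀ i : Fin s, (3*(r:ℝ) - 1) * (P i).card < 3 * n := by
      intro i
      obtain ⟨x, hx⟩ := hcsurj i
      have hd := hdisj i x hx
      have hle : (P i).card + (N x).card ≤ n := by
        rw [← Finset.card_union_of_disjoint hd]
        exact (Finset.card_le_univ _)
      have hle' : ((P i).card : ℝ) + ((N x).card : ℝ) ≤ (n : ℝ) := by exact_mod_cast hle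
      have := hdeg' x
      nlinarith
    by_cases hA : ∃ v : V, r ≤ ((N v).image c).card
    · -- Case A: some out-neighborhood meets at least r parts
      obtain ⟨v, hQ⟩ := hA
      set T : Finset V := N v with hT
      set Q : Finset (Fin s) := T.image c with hQdef
      have hmemQ : ∀ w : ↥T, c w.1 ∈ Q := fun w => mem_image_of_mem c w.2
      set e := Q.equivFin with he
      have hsurj' : Function.Surjective (fun w : ↥T => e ⟨c w.1, hmemQ w⟩) := by
        intro j
        have hmem : ((e.symm j : ↥Q) : Fin s) ∈ T.image c := (e.symm j).2
        rw [Finset.mem_image] at hmem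
        obtain ⟨x, hx, hcx⟩ := hmem
        refine ⟨⟨x, hx⟩, ?_⟩
        show e ⟨c x, hmemQ ⟨x, hx⟩⟩ = j
        have h2 : (⟨c x, hmemQ ⟨x, hx⟩⟩ : {y // y ∈ Q}) = e.symm j := Subtype.ext hcx
        rw [h2, Equiv.apply_symm_apply]
      have hpart' : ∀ a b : ↥T, ((fun a b : ↥T => A a.1 b.1) a b ∨ (fun a b : ↥T => A a.1 b.1) b a)
          ↔ (fun w : ↥T => e ⟨c w.1, hmemQ w⟩) a ≠ (fun w : ↥T => e ⟨c w.1, hmemQ w⟩) b := by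
        intro a b
        simp only []
        rw [hpartite a.1 b.1]
        constructor
        · intro h hc
          exact h (Subtype.ext_iff.1 (e.injective hc))
        · intro h hc
          exact h (congrArg e (Subtype.ext hc))
      have hdegW : ∀ w : ↥T, (3 * (r : ℝ) - 7) / (3 * (r : ℝ) - 4) * (Fintype.card ↥T) <
          Nat.card {u : ↥T // (fun a b : ↥T => A a.1 b.1) w u} := by
        intro w
        have hcardW : Fintype.card ↥T = T.card := Fintype.card_coe T
        have hcardsub : Nat.card {u : ↥T // A w.1 u.1} = (T ∩ N w.1).card := by
          rw [Nat.card_congr (Equiv.subtypeSubtypeEquivSubtypeInter _ _)]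
          rw [Nat.card_eq_fintype_card]
          rw [Fintype.card_subtype]
          congr 1
          ext x
          simp [hN, Finset.mem_inter, and_comm]
        rw [hcardW]
        have hrw : Nat.card {u : ↥T // (fun a b : ↥T => A a.1 b.1) w u} = (T ∩ N w.1).card :=
          hcardsub
        rw [hrw]
        have hinter : T.card + (N w.1).card ≤ (T ∩ N w.1).card + n := by
          rw [← Finset.card_inter_add_card_union]
          exact Nat.add_le_add_left (Finset.card_le_univ _) _
        have hinter' : (T.card : ℝ) + ((N w.1).card : ℝ) ≤ ((T ∩ N w.1).card : ℝ) + n := by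
          exact_mod_cast hinter
        have h4 : (0:ℝ) < 3*(r:ℝ) - 4 := by linarith
        rw [div_mul_eq_mul_div, div_lt_iff₀ h4]
        have h1 := hdeg' w.1
        have h2 : (3*(r:ℝ) - 4) * n < (3*(r:ℝ) - 1) * T.card := hdeg' v
        have s1 : (3*(r:ℝ) - 4) * ((n:ℝ) - ((N w.1).card : ℝ)) < 3 * (T.card : ℝ) := by
          nlinarith [mul_lt_mul_of_pos_left h1 h4, h2, hb, h4]
        nlinarith [s1, mul_le_mul_of_nonneg_left hinter' h4.le]
      obtain ⟨f', hinj', harc'⟩ := ih (↥T) Q.card hQ (fun a b : ↥T => A a.1 b.1)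
        (fun w : ↥T => e ⟨c w.1, hmemQ w⟩) hsurj' hpart' hdegW
      have hvT : v ∉ T := by
        rw [hT, hN]; simp [hirr v]
      refine ⟨Fin.cons v (fun i => (f' i).1), ?_, ?_⟩
      · rw [Fin.cons_injective_iff]
        constructor
        · rintro ⟨i, hi⟩
          exact hvT (hi ▸ (f' i).2)
        · intro i j hij
          exact hinj' (Subtype.ext hij)
      · intro i j hij
        induction j using Fin.cases with
        | zero => exact absurd hij (Fin.not_lt_zero i)
        | succ j' =>
          induction i using Fin.cases with
          | zero =>
            rw [Fin.cons_zero, Fin.cons_succ]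
            have hmem : (f' j').1 ∈ univ.filter (fun u => A v u) := (f' j').2
            exact (mem_filter.1 hmem).2
          | succ i' =>
            rw [Fin.cons_succ, Fin.cons_succ]
            exact harc' i' j' (by rwa [← Fin.succ_lt_succ_iff])
    · -- Case B: contradiction
      exfalso
      push_neg at hA
      have hApred : ∀ v : V, ((N v).image c).card < r := fun v =>
        lt_of_not_ge (fun h => absurd h (by exact fun h2 => (hA v).not_ge h2))
      obtain ⟨v0, _⟩ := hcsurj ⟨0, by omega⟩
      have hn0 : 0 < n := by
        rw [hn]
        exact Fintype.card_pos_iff.2 ⟨v0⟩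
      have hn0R : (0:ℝ) < n := by exact_mod_cast hn0
      have hNlesum : ∀ v : V, (N v).card ≤ ∑ i ∈ (N v).image c, (P i).card := by
        intro v
        have hsub : N v ⊆ ((N v).image c).biUnion P := by
          intro x hx
          rw [Finset.mem_biUnion]
          exact ⟨c x, mem_image_of_mem c hx, by rw [hP]; simp⟩
        exact le_trans (Finset.card_le_card hsub) Finset.card_biUnion_le
      by_cases hsmall : ∃ i : Fin s, ((P i).card : ℝ) * (3*(r:ℝ) - 1) ≤ 2 * n
      · obtain ⟨i0, hi0⟩ := hsmall
        obtain ⟨w, hw⟩ := hcsurj i0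
        have hnoarc : ∀ u : V, ¬ A u w := by
          intro u hAu
          have hwN : w ∈ N u := mem_filter.2 ⟨mem_univ w, hAu⟩
          have hi0mem : i0 ∈ (N u).image c := hw ▸ mem_image_of_mem c hwN
          set Qu := (N u).image c with hQu
          have hsplit : (P i0).card + ∑ i ∈ Qu.erase i0, (P i).card
              = ∑ i ∈ Qu, (P i).card := Finset.add_sum_erase Qu (fun i => (P i).card) hi0mem
          have hE : (Qu.erase i0).card + 2 ≤ r := by
            have h1 := hApred u
            rw [← hQu] at h1
            have h2 : (Qu.erase i0).card = Qu.card - 1 := Finset.card_erase_of_mem hi0mem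
            have h3 : 1 ≤ Qu.card := Finset.card_pos.2 ⟨i0, hi0mem⟩
            omega
          have hEr : ((Qu.erase i0).card : ℝ) ≤ (r:ℝ) - 2 := by
            have : ((Qu.erase i0).card : ℝ) + 2 ≤ (r:ℝ) := by exact_mod_cast hE
            linarith
          have hsumE : (∑ i ∈ Qu.erase i0, ((P i).card : ℝ)) * (3*(r:ℝ) - 1)
              ≤ ((Qu.erase i0).card : ℝ) * (3 * n) := by
            have h6 := Finset.sum_le_card_nsmul (Qu.erase i0)
              (fun i => ((P i).card : ℝ) * (3*(r:ℝ) - 1)) (3 * n)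
              (fun i _ => by
                show ((P i).card : ℝ) * (3*(r:ℝ) - 1) ≤ 3 * n
                have := hpartsize i; linarith)
            rw [← Finset.sum_mul] at h6
            simpa [nsmul_eq_mul] using h6
          have hNu : ((N u).card : ℝ) ≤ ((P i0).card : ℝ) + ∑ i ∈ Qu.erase i0, ((P i).card : ℝ) := by
            have h1 := hNlesum u
            rw [← hQu, ← hsplit] at h1
            exact_mod_cast h1
          have hkey := hdeg' u
          have h3n : (0:ℝ) ≤ 3 * n := by positivity
          nlinarith [hsumE, hkey, hi0, hn0R, hb,
            mul_le_mul_of_nonneg_left hNu hb.le,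
            mul_le_mul_of_nonneg_right hEr h3n]
        have harcw : ∀ u : V, c u ≠ c w → A w u := by
          intro u hcu
          rcases (hpartite w u).2 (fun h => hcu h.symm) with h | h
          · exact h
          · exact absurd h (hnoarc u)
        have hsup : (univ.erase i0 : Finset (Fin s)) ⊆ (N w).image c := by
          intro i hi
          obtain ⟨u, hu⟩ := hcsurj i
          have hune : c u ≠ c w := by
            rw [hu, hw]
            exact Finset.ne_of_mem_erase hi
          have hmemw : u ∈ N w := mem_filter.2 ⟨mem_univ u, harcw u hune⟩
          exact hu ▸ mem_image_of_mem c hmemw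
        have hcard := Finset.card_le_card hsup
        rw [Finset.card_erase_of_mem (mem_univ i0), Finset.card_univ, Fintype.card_fin] at hcard
        have := hApred w
        omega
      · push_neg at hsmall
        set Q := (N v0).image c with hQ0
        have hcv0 : c v0 ∉ Q := by
          rw [hQ0]
          intro h
          rw [Finset.mem_image] at h
          obtain ⟨x, hx, hcx⟩ := h
          rw [hN] at hx
          exact (hpartite v0 x).1 (Or.inl (mem_filter.1 hx).2) hcx.symm
        set Qp := insert (c v0) Q with hQp
        have hQpcard : Qp.card ≤ r := by
          rw [hQp, Finset.card_insert_of_notMem hcv0]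
          have h5 := hApred v0
          rw [← hQ0] at h5
          omega
        have hi1 : ∃ i : Fin s, i ∉ Qp := by
          by_contra h
          push_neg at h
          have : Qp = univ := Finset.eq_univ_iff_forall.2 h
          rw [this, Finset.card_univ, Fintype.card_fin] at hQpcard
          omega
        obtain ⟨i1, hi1⟩ := hi1
        have hsum2 : (P i1).card + ((P (c v0)).card + ∑ i ∈ Q, (P i).card) ≤ n := by
          have hstep : ∑ i ∈ insert i1 (insert (c v0) Q), (P i).card ≤ n := by
            rw [← hsum]
            exact Finset.sum_le_sum_of_subset (Finset.subset_univ _)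
          rwa [Finset.sum_insert hi1, Finset.sum_insert hcv0] at hstep
        have hsum2R : ((P i1).card : ℝ) + ((P (c v0)).card : ℝ)
            + (∑ i ∈ Q, ((P i).card : ℝ)) ≤ (n : ℝ) := by
          have : (((P i1).card + ((P (c v0)).card + ∑ i ∈ Q, (P i).card) : ℕ) : ℝ) ≤ (n:ℝ) := by
            exact_mod_cast hsum2
          push_cast at this
          linarith
        have hNv0 : ((N v0).card : ℝ) ≤ ∑ i ∈ Q, ((P i).card : ℝ) := by
          have := hNlesum v0
          rw [← hQ0] at this
          exact_mod_cast this
        have h1 := hsmall i1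
        have h2 := hsmall (c v0)
        have h3 := hdeg' v0
        nlinarith [hsum2R, hNv0, h1, h2, h3, hn0R, hb]

/-- If `D` is a digraph on `n` vertices whose underlying graph is complete `s`-partite
with `s ≥ r ≥ 3`, and every out-degree exceeds `((3r−7)/(3r−4))·n`, then `D` contains
a transitive tournament on `r` vertices. -/
theorem stmt_7 {V : Type*} [Fintype V] (n r s : ℕ) (hn : Fintype.card V = n)
    (hr : 3 ≤ r) (hs : r ≤ s)
    (A : V → V → Prop)
    (c : V → Fin s) (hcsurj : Function.Surjective c)
    (hpartite : ∀ u v : V, (A u v ∨ A v u) ↔ c u ≠ c v)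
    (hdeg : ∀ v : V, (3 * (r : ℝ) - 7) / (3 * (r : ℝ) - 4) * n < Nat.card {u : V // A v u}) :
    ∃ f : Fin r → V, Function.Injective f ∧ ∀ i j : Fin r, i < j → A (f i) (f j) := by
  subst hn
  exact tt_aux r (by omega) V s hs A c hcsurj hpartite hdeg
end

section
/- For n divisible by 5 (n ≥ 5), the double orientation of the balanced 5-cycle blowup C_5[n/5] is a digraph on n vertices that contains no transitive tournament on 3 vertices, has chromatic number 3, and has every out-degree equal to (2/5)·n. -/
/-- The double orientation of the balanced blowup `C_5[m]` (on `n = 5m` vertices) is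
`T_3`-free, has chromatic number 3, and every out-degree equals `2m = (2/5)·n`. -/
theorem stmt_9 (m : ℕ) (hm : 1 ≤ m) :
    let V := ZMod 5 × Fin m
    let A : V → V → Prop := fun p q => q.1 = p.1 + 1 ∨ p.1 = q.1 + 1
    Fintype.card V = 5 * m ∧
    (¬ ∃ a b c : V, a ≠ b ∧ a ≠ c ∧ b ≠ c ∧ A a b ∧ A a c ∧ A b c) ∧
    (∃ col : V → Fin 3, ∀ p q : V, A p q → col p ≠ col q) ∧
    (¬ ∃ col : V → Fin 2, ∀ p q : V, A p q → col p ≠ col q) ∧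
    (∀ p : V, Nat.card {q : V // A p q} = 2 * m) := by
  intro V A
  refine ⟨?_, ?_, ?_, ?_, ?_⟩
  · simp [V, Fintype.card_prod]
  · rintro ⟨a, b, c, -, -, -, hab, hac, hbc⟩
    have key : ∀ x y z : ZMod 5, (y = x + 1 ∨ x = y + 1) → (z = x + 1 ∨ x = z + 1) →
        (z = y + 1 ∨ y = z + 1) → False := by decide
    exact key a.1 b.1 c.1 hab hac hbc
  · refine ⟨fun p => if p.1 = 0 ∨ p.1 = 2 then 0 else if p.1 = 1 ∨ p.1 = 3 then 1 else 2, ?_⟩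
    intro p q h
    have key : ∀ x y : ZMod 5, (y = x + 1 ∨ x = y + 1) →
        (if x = 0 ∨ x = 2 then (0 : Fin 3) else if x = 1 ∨ x = 3 then 1 else 2) ≠
        (if y = 0 ∨ y = 2 then (0 : Fin 3) else if y = 1 ∨ y = 3 then 1 else 2) := by decide
    exact key p.1 q.1 h
  · rintro ⟨col, h⟩
    have key : ¬ ∃ g : ZMod 5 → Fin 2, ∀ x : ZMod 5, g (x + 1) ≠ g x := by decide
    exact key ⟨fun x => col (x, ⟨0, hm⟩),
      fun x => (h (x, ⟨0, hm⟩) (x + 1, ⟨0, hm⟩) (Or.inl rfl)).symm⟩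
  · intro p
    have e : {q : V // A p q} ≃ {y : ZMod 5 // y = p.1 + 1 ∨ p.1 = y + 1} × Fin m :=
      { toFun := fun q => (⟨q.1.1, q.2⟩, q.1.2)
        invFun := fun yj => ⟨(yj.1.1, yj.2), yj.1.2⟩
        left_inv := fun q => rfl
        right_inv := fun yj => rfl }
    have key : ∀ c : ZMod 5, Fintype.card {y : ZMod 5 // y = c + 1 ∨ c = y + 1} = 2 := by
      decide
    rw [Nat.card_congr e, Nat.card_prod, Nat.card_eq_fintype_card, Nat.card_eq_fintype_card,
      Fintype.card_fin, key p.1]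
end

section
/- Let n_1 = ⌈n/3⌉, n_2 = ⌊n/3⌋, n_3 = n − n_1 − n_2. The blowup C⃗_3[n_1, n_2, n_3] of the directed triangle (three independent sets V_1, V_2, V_3 of these sizes, with all arcs from V_1 to V_2, from V_2 to V_3, and from V_3 to V_1) contains neither C_5'' nor C_5''', has chromatic number 3 (for n ≥ 3), and has minimum out-degree ⌊n/3⌋. -/
namespace Stmt14Aux

def Arc {α β γ : Type} : (α ⊕ β ⊕ γ) → (α ⊕ β ⊕ γ) → Prop :=
  fun a b =>
    Sum.elim (fun _ => Sum.elim (fun _ => False) (Sum.elim (fun _ => True) (fun _ => False)) b)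
      (Sum.elim (fun _ => Sum.elim (fun _ => False) (Sum.elim (fun _ => False) (fun _ => True)) b)
        (fun _ => Sum.elim (fun _ => True) (fun _ => False) b)) a

def lvl {n1 n2 n3 : ℕ} : (Fin n1 ⊕ Fin n2 ⊕ Fin n3) → ZMod 3
  | Sum.inl _ => 0
  | Sum.inr (Sum.inl _) => 1
  | Sum.inr (Sum.inr _) => 2

lemma lvl_arc {n1 n2 n3 : ℕ} (a b : Fin n1 ⊕ Fin n2 ⊕ Fin n3) (h : Arc a b) :
    lvl b = lvl a + 1 := by
  rcases a with a | a | a <;> rcases b with b | b | b <;>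
    first | exact h.elim | rfl

def outInl {n1 n2 n3 : ℕ} (x : Fin n1) :
    {u : Fin n1 ⊕ Fin n2 ⊕ Fin n3 // Arc (Sum.inl x) u} ≃ Fin n2 where
  toFun u := match u with
    | ⟨Sum.inr (Sum.inl y), _⟩ => y
    | ⟨Sum.inl _, h⟩ => h.elim
    | ⟨Sum.inr (Sum.inr _), h⟩ => h.elim
  invFun y := ⟨Sum.inr (Sum.inl y), trivial⟩
  left_inv u := match u with
    | ⟨Sum.inr (Sum.inl y), _⟩ => rfl
    | ⟨Sum.inl _, h⟩ => h.elim
    | ⟨Sum.inr (Sum.inr _), h⟩ => h.elim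
  right_inv y := rfl

def outMid {n1 n2 n3 : ℕ} (x : Fin n2) :
    {u : Fin n1 ⊕ Fin n2 ⊕ Fin n3 // Arc (Sum.inr (Sum.inl x)) u} ≃ Fin n3 where
  toFun u := match u with
    | ⟨Sum.inr (Sum.inr y), _⟩ => y
    | ⟨Sum.inl _, h⟩ => h.elim
    | ⟨Sum.inr (Sum.inl _), h⟩ => h.elim
  invFun y := ⟨Sum.inr (Sum.inr y), trivial⟩
  left_inv u := match u with
    | ⟨Sum.inr (Sum.inr y), _⟩ => rfl
    | ⟨Sum.inl _, h⟩ => h.elim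
    | ⟨Sum.inr (Sum.inl _), h⟩ => h.elim
  right_inv y := rfl

def outRight {n1 n2 n3 : ℕ} (x : Fin n3) :
    {u : Fin n1 ⊕ Fin n2 ⊕ Fin n3 // Arc (Sum.inr (Sum.inr x)) u} ≃ Fin n1 where
  toFun u := match u with
    | ⟨Sum.inl y, _⟩ => y
    | ⟨Sum.inr (Sum.inl _), h⟩ => h.elim
    | ⟨Sum.inr (Sum.inr _), h⟩ => h.elim
  invFun y := ⟨Sum.inl y, trivial⟩
  left_inv u := match u with
    | ⟨Sum.inl y, _⟩ => rfl
    | ⟨Sum.inr (Sum.inl _), h⟩ => h.elim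
    | ⟨Sum.inr (Sum.inr _), h⟩ => h.elim
  right_inv y := rfl

end Stmt14Aux

open Stmt14Aux in
/-- The blowup `C⃗_3[n₁,n₂,n₃]` with `n₁ = ⌈n/3⌉`, `n₂ = ⌊n/3⌋`, `n₃ = n−n₁−n₂`
contains neither `C_5''` nor `C_5'''`, has chromatic number 3 (for `n ≥ 3`), and has
minimum out-degree `⌊n/3⌋`. -/
theorem stmt_14 (n : ℕ) :
    let n1 := (n + 2) / 3
    let n2 := n / 3
    let n3 := n - n1 - n2
    let V := Fin n1 ⊕ Fin n2 ⊕ Fin n3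
    let A : V → V → Prop := fun a b =>
      match a, b with
      | Sum.inl _, Sum.inr (Sum.inl _) => True
      | Sum.inr (Sum.inl _), Sum.inr (Sum.inr _) => True
      | Sum.inr (Sum.inr _), Sum.inl _ => True
      | _, _ => False
    (¬ ∃ p : Fin 5 → V, Function.Injective p ∧
        A (p 0) (p 1) ∧ A (p 1) (p 2) ∧ A (p 2) (p 3) ∧ A (p 4) (p 3) ∧ A (p 0) (p 4)) ∧
    (¬ ∃ p : Fin 5 → V, Function.Injective p ∧
        A (p 0) (p 1) ∧ A (p 2) (p 1) ∧ A (p 2) (p 3) ∧ A (p 4) (p 3) ∧ A (p 0) (p 4)) ∧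
    (3 ≤ n →
      (∃ col : V → Fin 3, ∀ a b : V, A a b → col a ≠ col b) ∧
      (¬ ∃ col : V → Fin 2, ∀ a b : V, A a b → col a ≠ col b)) ∧
    sInf (Set.range fun v : V => Nat.card {u : V // A v u}) = n / 3 := by
  intro n1 n2 n3 V A
  have e1 : n1 = (n + 2) / 3 := rfl
  have e2 : n2 = n / 3 := rfl
  have e3 : n3 = n - n1 - n2 := rfl
  have hAB : ∀ a b : V, A a b ↔ Arc a b := by
    rintro (a | a | a) (b | b | b) <;> exact Iff.rfl
  refine ⟨?_, ?_, ?_, ?_⟩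
  · rintro ⟨p, -, h1, h2, h3, h4, h5⟩
    have key : ∀ a b c d e : ZMod 3,
        b = a + 1 → c = b + 1 → d = c + 1 → d = e + 1 → e = a + 1 → False := by decide
    exact key (lvl (p 0)) (lvl (p 1)) (lvl (p 2)) (lvl (p 3)) (lvl (p 4))
      (lvl_arc _ _ ((hAB _ _).1 h1)) (lvl_arc _ _ ((hAB _ _).1 h2)) (lvl_arc _ _ ((hAB _ _).1 h3)) (lvl_arc _ _ ((hAB _ _).1 h4)) (lvl_arc _ _ ((hAB _ _).1 h5))
  · rintro ⟨p, -, h1, h2, h3, h4, h5⟩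
    have key : ∀ a b c d e : ZMod 3,
        b = a + 1 → b = c + 1 → d = c + 1 → d = e + 1 → e = a + 1 → False := by decide
    exact key (lvl (p 0)) (lvl (p 1)) (lvl (p 2)) (lvl (p 3)) (lvl (p 4))
      (lvl_arc _ _ ((hAB _ _).1 h1)) (lvl_arc _ _ ((hAB _ _).1 h2)) (lvl_arc _ _ ((hAB _ _).1 h3)) (lvl_arc _ _ ((hAB _ _).1 h4)) (lvl_arc _ _ ((hAB _ _).1 h5))
  · intro hn
    constructor
    · refine ⟨fun v => match v with
        | Sum.inl _ => 0 | Sum.inr (Sum.inl _) => 1 | Sum.inr (Sum.inr _) => 2, ?_⟩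
      rintro (a | a | a) (b | b | b) h <;> first | exact h.elim | simp
    · rintro ⟨col, hcol⟩
      have hn1 : 0 < n1 := by omega
      have hn2 : 0 < n2 := by omega
      have hn3 : 0 < n3 := by omega
      have key3 : ∀ x y z : Fin 2, x ≠ y → y ≠ z → z ≠ x → False := by decide
      exact key3 (col (Sum.inl ⟨0, hn1⟩)) (col (Sum.inr (Sum.inl ⟨0, hn2⟩)))
        (col (Sum.inr (Sum.inr ⟨0, hn3⟩)))
        (hcol _ _ True.intro) (hcol _ _ True.intro) (hcol _ _ True.intro)
  · rcases Nat.eq_zero_or_pos n with h0 | h1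
    · have hV : IsEmpty V := ⟨fun v => by
        rcases v with x | x | x
        · exact absurd x.isLt (by omega)
        · exact absurd x.isLt (by omega)
        · exact absurd x.isLt (by omega)⟩
      rw [Set.range_eq_empty, Nat.sInf_empty]
      omega
    · have hn1 : 0 < n1 := by omega
      have c1 : ∀ x : Fin n1, Nat.card {u : V // A (Sum.inl x) u} = n2 :=
        fun x => Nat.card_eq_of_equiv_fin ((Equiv.subtypeEquivRight (hAB _)).trans (outInl x))
      have c2 : ∀ x : Fin n2, Nat.card {u : V // A (Sum.inr (Sum.inl x)) u} = n3 :=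
        fun x => Nat.card_eq_of_equiv_fin ((Equiv.subtypeEquivRight (hAB _)).trans (outMid x))
      have c3 : ∀ x : Fin n3, Nat.card {u : V // A (Sum.inr (Sum.inr x)) u} = n1 :=
        fun x => Nat.card_eq_of_equiv_fin ((Equiv.subtypeEquivRight (hAB _)).trans (outRight x))
      apply le_antisymm
      · exact Nat.sInf_le ⟨Sum.inl ⟨0, hn1⟩, c1 _⟩
      · apply le_csInf ⟨_, Set.mem_range_self (Sum.inl ⟨0, hn1⟩)⟩
        rintro b ⟨v, rfl⟩
        rcases v with x | x | x
        · exact (c1 x).ge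
        · exact le_trans (by omega : n / 3 ≤ n3) (c2 x).ge
        · exact le_trans (by omega : n / 3 ≤ n1) (c3 x).ge
end

section
/- Let D be a digraph on n vertices whose underlying graph has odd girth at least 7, and let C be a shortest odd cycle of the underlying graph, of length |C| ≥ 7. Then every vertex v of D has at most 2 in-neighbors on C (i.e., at most two vertices of C send an arc to v), and consequently δ⁺(D) ≤ 2n/|C| ≤ 2n/7 < n/3. -/
section Aux

variable {V : Type*} {L : ℕ} {A : V → V → Prop}

/-- From a natural number equation `(c : ZMod L) = 0` with `0 < c`, get `L ≤ c`. -/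
lemma aux_le_of_cast_zero (hL7 : 7 ≤ L) {c : ℕ} (hc : 0 < c) (h : (c : ZMod L) = 0) :
    L ≤ c := by
  haveI : NeZero L := ⟨by omega⟩
  exact Nat.le_of_dvd hc ((ZMod.natCast_eq_zero_iff c L).mp h)

/-- Chord lemma: an edge between `f a` and `f b` with even forward gap forces `a = b + 1`. -/
lemma aux_chord (hL : Odd L) (hL7 : 7 ≤ L)
    (f : ZMod L → V) (hf : Function.Injective f)
    (hcyc : ∀ i : ZMod L, A (f i) (f (i + 1)) ∨ A (f (i + 1)) (f i))
    (hshortest : ∀ L' : ℕ, L' < L → Odd L' →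
      ¬ ∃ g : ZMod L' → V, Function.Injective g ∧
          ∀ i : ZMod L', A (g i) (g (i + 1)) ∨ A (g (i + 1)) (g i))
    (a b : ZMod L) (hab : a ≠ b) (hedge : A (f a) (f b) ∨ A (f b) (f a))
    (heven : Even (b - a).val) : a = b + 1 := by
  haveI : NeZero L := ⟨by omega⟩
  set d := (b - a).val with hd
  have hdcast : ((d : ℕ) : ZMod L) = b - a := by
    simp [hd, ZMod.natCast_val, ZMod.cast_id]
  have hdne' : b - a ≠ 0 := sub_ne_zero.mpr (Ne.symm hab)
  have hdne : d ≠ 0 := fun h0 => hdne' (by rw [← hdcast, h0]; simp)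
  have hdlt : d < L := ZMod.val_lt _
  by_cases hcase : d = L - 1
  · -- then b - a = -1, so a = b + 1
    have hba : b - a = -1 := by
      rw [← hdcast, hcase]
      push_cast [Nat.cast_sub (by omega : 1 ≤ L)]
      simp
    linear_combination -hba
  · -- build an odd cycle of length d + 1 < L
    exfalso
    have hd2 : 2 ≤ d := by rcases heven with ⟨k, hk⟩; omega
    have hdlt' : d + 1 < L := by omega
    haveI : NeZero (d + 1) := ⟨by omega⟩
    apply hshortest (d + 1) hdlt' (Even.add_one heven)
    refine ⟨fun k => f (a + ((k.val : ℕ) : ZMod L)), ?_, ?_⟩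
    · intro k k' h
      have h2 : ((k.val : ℕ) : ZMod L) = ((k'.val : ℕ) : ZMod L) := add_left_cancel (hf h)
      have hk : k.val < L := lt_of_lt_of_le (ZMod.val_lt k) (by omega)
      have hk' : k'.val < L := lt_of_lt_of_le (ZMod.val_lt k') (by omega)
      have hvv : k.val = k'.val := by
        have := congrArg ZMod.val h2
        rwa [ZMod.val_cast_of_lt hk, ZMod.val_cast_of_lt hk'] at this
      exact ZMod.val_injective _ hvv
    · intro k
      dsimp only
      haveI : Fact (1 < d + 1) := ⟨by omega⟩
      have hval1 : (k + 1).val = (k.val + 1) % (d + 1) := by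
        rw [ZMod.val_add, ZMod.val_one]
      by_cases hk : k.val = d
      · -- wrap-around: edge between f b and f a
        have h1 : (k + 1).val = 0 := by rw [hval1, hk]; simp
        have h2 : a + ((k.val : ℕ) : ZMod L) = b := by
          rw [hk, hdcast]; ring
        rw [h1, h2]
        simpa using hedge.symm
      · have hklt : k.val < d := by have := ZMod.val_lt k; omega
        have h1 : (k + 1).val = k.val + 1 := by rw [hval1, Nat.mod_eq_of_lt (by omega)]
        rw [h1]
        have hcast : ((k.val + 1 : ℕ) : ZMod L) = ((k.val : ℕ) : ZMod L) + 1 := by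
          push_cast; ring
        rw [hcast, ← add_assoc]
        exact hcyc (a + ((k.val : ℕ) : ZMod L))

/-- Pair lemma: if `v` is off the cycle and receives arcs from `f x` and `f y` with even
forward gap, then that gap is `2`. -/
lemma aux_pair (hL : Odd L) (hL7 : 7 ≤ L)
    (f : ZMod L → V) (hf : Function.Injective f)
    (hcyc : ∀ i : ZMod L, A (f i) (f (i + 1)) ∨ A (f (i + 1)) (f i))
    (hshortest : ∀ L' : ℕ, L' < L → Odd L' →
      ¬ ∃ g : ZMod L' → V, Function.Injective g ∧
          ∀ i : ZMod L', A (g i) (g (i + 1)) ∨ A (g (i + 1)) (g i))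
    {v : V} (hv : v ∉ Set.range f)
    (x y : ZMod L) (hxy : x ≠ y) (hx : A (f x) v) (hy : A (f y) v)
    (heven : Even (y - x).val) : y = x + 2 := by
  haveI : NeZero L := ⟨by omega⟩
  set d := (y - x).val with hd
  have hdcast : ((d : ℕ) : ZMod L) = y - x := by
    simp [hd, ZMod.natCast_val, ZMod.cast_id]
  have hdne' : y - x ≠ 0 := sub_ne_zero.mpr (Ne.symm hxy)
  have hdne : d ≠ 0 := fun h0 => hdne' (by rw [← hdcast, h0]; simp)
  have hdlt : d < L := ZMod.val_lt _
  have hd2 : 2 ≤ d := by rcases heven with ⟨k, hk⟩; omega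
  by_cases hcase : d = 2
  · have : y - x = ((2 : ℕ) : ZMod L) := by rw [← hdcast, hcase]
    push_cast at this
    linear_combination this
  · exfalso
    have hd4 : 4 ≤ d := by rcases heven with ⟨k, hk⟩; omega
    set m := L - d with hm
    have hm1 : 1 ≤ m := by omega
    have hmL : m + 2 < L := by omega
    have hmOdd : Odd (m + 2) := by
      have := Nat.Odd.sub_even (le_of_lt hdlt) hL heven
      rcases this with ⟨k, hk⟩
      exact ⟨k + 1, by omega⟩
    haveI : NeZero (m + 2) := ⟨by omega⟩
    haveI : Fact (1 < m + 2) := ⟨by omega⟩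
    apply hshortest (m + 2) hmL hmOdd
    -- cycle:  v, f y, f (y+1), ..., f (y + m) = f x, back to v
    have hkey : ∀ t : ℕ, t ≤ m → y + ((t : ℕ) : ZMod L) = y + t := fun t _ => rfl
    have hme : y + ((m : ℕ) : ZMod L) = x := by
      have : ((m : ℕ) : ZMod L) = x - y := by
        rw [hm, Nat.cast_sub (le_of_lt hdlt), ZMod.natCast_self, hdcast]
        ring
      rw [this]; ring
    refine ⟨fun k => if k.val = 0 then v else f (y + ((k.val - 1 : ℕ) : ZMod L)), ?_, ?_⟩
    · intro k k' h
      simp only at h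
      by_cases h0 : k.val = 0 <;> by_cases h0' : k'.val = 0
      · exact ZMod.val_injective _ (h0.trans h0'.symm)
      · rw [if_pos h0, if_neg h0'] at h
        exact absurd ⟨_, h.symm⟩ hv
      · rw [if_neg h0, if_pos h0'] at h
        exact absurd ⟨_, h⟩ hv
      · rw [if_neg h0, if_neg h0'] at h
        have h2 := add_left_cancel (hf h)
        have hk : k.val - 1 < L := by have := ZMod.val_lt k; omega
        have hk' : k'.val - 1 < L := by have := ZMod.val_lt k'; omega
        have hvv : k.val - 1 = k'.val - 1 := by
          have := congrArg ZMod.val h2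
          rwa [ZMod.val_cast_of_lt hk, ZMod.val_cast_of_lt hk'] at this
        exact ZMod.val_injective _ (by omega)
    · intro k
      dsimp only
      have hval1 : (k + 1).val = (k.val + 1) % (m + 2) := by
        rw [ZMod.val_add, ZMod.val_one]
      have hkval : k.val < m + 2 := ZMod.val_lt k
      by_cases h0 : k.val = 0
      · -- edge v — f y
        have h1 : (k + 1).val = 1 := by
          rw [hval1, h0]
          exact Nat.mod_eq_of_lt (by omega)
        rw [if_pos h0, h1, if_neg (by omega : ¬ (1 = 0))]
        right
        simpa using hy
      · by_cases hlast : k.val = m + 1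
        · -- edge f x — v
          have h1 : (k + 1).val = 0 := by rw [hval1, hlast]; simp
          rw [if_neg h0, h1, if_pos rfl]
          left
          have : ((k.val - 1 : ℕ) : ZMod L) = ((m : ℕ) : ZMod L) := by rw [hlast]; norm_num
          rw [this, hme]
          exact hx
        · -- middle edge
          have hkm : k.val ≤ m := by omega
          have h1 : (k + 1).val = k.val + 1 := by
            rw [hval1, Nat.mod_eq_of_lt (by omega)]
          rw [if_neg h0, h1, if_neg (by omega : ¬ (k.val + 1 = 0))]
          have hcast : ((k.val + 1 - 1 : ℕ) : ZMod L) = ((k.val - 1 : ℕ) : ZMod L) + 1 := by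
            have h2 : (k.val + 1 - 1 : ℕ) = (k.val - 1) + 1 := by omega
            rw [h2]; push_cast; ring
          rw [hcast, ← add_assoc]
          exact hcyc (y + ((k.val - 1 : ℕ) : ZMod L))

/-- One of the two gaps between distinct elements of `ZMod L` (`L` odd) is even. -/
lemma aux_parity (hL : Odd L) (hL7 : 7 ≤ L) (x y : ZMod L) (hxy : x ≠ y) :
    Even (y - x).val ∨ Even (x - y).val := by
  haveI : NeZero L := ⟨by omega⟩
  have h1 : x - y = -(y - x) := by ring
  have hne : y - x ≠ 0 := sub_ne_zero.mpr (Ne.symm hxy)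
  haveI : NeZero (y - x) := ⟨hne⟩
  have h2 : (x - y).val = L - (y - x).val := by
    rw [h1, ZMod.val_neg_of_ne_zero]
  have h3 : (y - x).val < L := ZMod.val_lt _
  have h4 : (y - x).val ≠ 0 := fun h0 => hne (by
    have : ((y - x).val : ZMod L) = y - x := by simp [ZMod.natCast_val, ZMod.cast_id]
    rw [← this, h0]; simp)
  rcases hL with ⟨k, hk⟩
  rcases Nat.even_or_odd (y - x).val with h | h
  · exact Or.inl h
  · right
    rw [h2]
    rcases h with ⟨j, hj⟩
    exact ⟨k - j, by omega⟩

end Aux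

/-- If the underlying graph of a digraph `D` on `n` vertices has odd girth at least 7
and `f` is a shortest odd cycle, of length `L ≥ 7`, then every vertex has at most 2
in-neighbours on the cycle, and consequently some vertex has out-degree at most
`2n/L ≤ 2n/7 < n/3`. -/
theorem stmt_16 {V : Type*} [Fintype V] (n L : ℕ) (hn : Fintype.card V = n)
    (A : V → V → Prop) (hirr : ∀ v, ¬ A v v)
    (hL : Odd L) (hL7 : 7 ≤ L)
    (f : ZMod L → V) (hf : Function.Injective f)
    (hcyc : ∀ i : ZMod L, A (f i) (f (i + 1)) ∨ A (f (i + 1)) (f i))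
    (hshortest : ∀ L' : ℕ, L' < L → Odd L' →
      ¬ ∃ g : ZMod L' → V, Function.Injective g ∧
          ∀ i : ZMod L', A (g i) (g (i + 1)) ∨ A (g (i + 1)) (g i)) :
    (∀ v : V, Nat.card {i : ZMod L // A (f i) v} ≤ 2) ∧
    ∃ u : V, (Nat.card {w : V // A u w} : ℝ) ≤ 2 * n / L ∧
      2 * (n : ℝ) / L ≤ 2 * n / 7 ∧ 2 * (n : ℝ) / 7 < n / 3 := by
  classical
  haveI : NeZero L := ⟨by omega⟩
  -- Part 1: every vertex has at most 2 in-neighbours on the cycle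
  have part1 : ∀ v : V, Nat.card {i : ZMod L // A (f i) v} ≤ 2 := by
    intro v
    rw [Nat.card_eq_fintype_card, Fintype.card_subtype]
    by_contra hcon
    push_neg at hcon
    obtain ⟨i1, i2, i3, h1, h2, h3, h12, h13, h23⟩ := Finset.two_lt_card_iff.mp hcon
    simp only [Finset.mem_filter, Finset.mem_univ, true_and] at h1 h2 h3
    by_cases hv : v ∈ Set.range f
    · -- v on the cycle: each in-neighbour must be a cycle-neighbour of v
      obtain ⟨k, rfl⟩ := hv
      have hnb : ∀ i : ZMod L, A (f i) (f k) → i = k + 1 ∨ k = i + 1 := by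
        intro i hi
        have hik : i ≠ k := fun h => hirr _ (h ▸ hi)
        rcases aux_parity hL hL7 i k hik with he | he
        · exact Or.inl (aux_chord hL hL7 f hf hcyc hshortest i k hik
            (Or.inl hi) he)
        · exact Or.inr (aux_chord hL hL7 f hf hcyc hshortest k i hik.symm
            (Or.inr hi) he)
      have e1 := hnb i1 h1
      have e2 := hnb i2 h2
      have e3 := hnb i3 h3
      rcases e1 with e1 | e1 <;> rcases e2 with e2 | e2 <;> rcases e3 with e3 | e3
      · exact h12 (by linear_combination e1 - e2)
      · exact h12 (by linear_combination e1 - e2)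
      · exact h13 (by linear_combination e1 - e3)
      · exact h23 (by linear_combination e3 - e2)
      · exact h23 (by linear_combination e2 - e3)
      · exact h13 (by linear_combination e3 - e1)
      · exact h12 (by linear_combination e2 - e1)
      · exact h12 (by linear_combination e2 - e1)
    · -- v off the cycle: every pair of in-neighbours is at gap 2
      have hpair : ∀ x y : ZMod L, x ≠ y → A (f x) v → A (f y) v →
          y = x + 2 ∨ x = y + 2 := by
        intro x y hxy hx hy
        rcases aux_parity hL hL7 x y hxy with he | he
        · exact Or.inl (aux_pair hL hL7 f hf hcyc hshortest hv x y hxy hx hy he)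
        · exact Or.inr (aux_pair hL hL7 f hf hcyc hshortest hv y x hxy.symm hy hx he)
      have c2 : (2 : ZMod L) ≠ 0 := by
        intro h
        have := aux_le_of_cast_zero hL7 (by norm_num : 0 < 2) (by exact_mod_cast h)
        omega
      have c6 : (6 : ZMod L) ≠ 0 := by
        intro h
        have := aux_le_of_cast_zero hL7 (by norm_num : 0 < 6) (by exact_mod_cast h)
        omega
      have p12 := hpair i1 i2 h12 h1 h2
      have p13 := hpair i1 i3 h13 h1 h3
      have p23 := hpair i2 i3 h23 h2 h3
      rcases p12 with e1 | e1 <;> rcases p13 with e2 | e2 <;> rcases p23 with e3 | e3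
      · exact h23 (by linear_combination e1 - e2)
      · exact h23 (by linear_combination e1 - e2)
      · exact c6 (by linear_combination -e1 - e2 - e3)
      · exact c2 (by linear_combination -e1 - e2 + e3)
      · exact c2 (by linear_combination -e1 - e2 + e3)
      · exact c6 (by linear_combination -e1 - e2 - e3)
      · exact h23 (by linear_combination e2 - e1)
      · exact h23 (by linear_combination e2 - e1)
  refine ⟨part1, ?_⟩
  -- Part 2: double counting
  have hnL : L ≤ n := by
    have := Fintype.card_le_of_injective f hf
    rwa [ZMod.card, hn] at this
  have hn0 : 0 < n := by omega
  -- pick a cycle vertex of minimal out-degree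
  obtain ⟨i0, _, hmin⟩ := Finset.exists_min_image (Finset.univ : Finset (ZMod L))
    (fun i => Nat.card {w : V // A (f i) w}) ⟨0, Finset.mem_univ 0⟩
  have hsum : L * Nat.card {w : V // A (f i0) w} ≤ 2 * n := by
    have hsum1 : ∀ i : ZMod L, Nat.card {w : V // A (f i) w}
        = ∑ w : V, if A (f i) w then 1 else 0 := by
      intro i
      rw [Nat.card_eq_fintype_card, Fintype.card_subtype, Finset.card_filter]
    have hsum2 : ∀ w : V, (∑ i : ZMod L, if A (f i) w then 1 else 0)
        = Nat.card {i : ZMod L // A (f i) w} := by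
      intro w
      rw [Nat.card_eq_fintype_card, Fintype.card_subtype, Finset.card_filter]
    calc L * Nat.card {w : V // A (f i0) w}
        = ∑ _i : ZMod L, Nat.card {w : V // A (f i0) w} := by
          rw [Finset.sum_const, Finset.card_univ, ZMod.card, smul_eq_mul]
      _ ≤ ∑ i : ZMod L, Nat.card {w : V // A (f i) w} :=
          Finset.sum_le_sum (fun i _ => hmin i (Finset.mem_univ i))
      _ = ∑ i : ZMod L, ∑ w : V, (if A (f i) w then 1 else 0) := by
          simp_rw [hsum1]
      _ = ∑ w : V, ∑ i : ZMod L, (if A (f i) w then 1 else 0) := Finset.sum_comm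
      _ = ∑ w : V, Nat.card {i : ZMod L // A (f i) w} := by simp_rw [hsum2]
      _ ≤ ∑ _w : V, 2 := Finset.sum_le_sum (fun w _ => part1 w)
      _ = 2 * n := by rw [Finset.sum_const, Finset.card_univ, hn, smul_eq_mul]; ring
  refine ⟨f i0, ?_, ?_, ?_⟩
  · have hL0 : (0 : ℝ) < L := by positivity
    rw [le_div_iff₀ hL0]
    calc (Nat.card {w : V // A (f i0) w} : ℝ) * L
        = (L * Nat.card {w : V // A (f i0) w} : ℕ) := by push_cast; ring
      _ ≤ ((2 * n : ℕ) : ℝ) := by exact_mod_cast hsum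
      _ = 2 * n := by push_cast; ring
  · have h7 : (7 : ℝ) ≤ L := by exact_mod_cast hL7
    have hL0 : (0 : ℝ) < L := by positivity
    have hn0' : (0 : ℝ) ≤ n := by positivity
    rw [div_le_div_iff₀ hL0 (by norm_num)]
    nlinarith
  · rw [div_lt_div_iff₀ (by norm_num) (by norm_num)]
    have : (0 : ℝ) < n := by exact_mod_cast hn0
    nlinarith
end

section
/- Let r ≥ 3 and let D be a digraph on n vertices such that D contains no transitive tournament on r vertices, and such that a set U of r vertices of D induces structure with: every vertex of D is dominated by at most r−1 vertices of U; Y is the set of vertices dominated by exactly r−1 vertices of U and Z = V(D) ∖ Y; D[Y] contains no transitive tournament on r−2 vertices. Then δ⁺(D) ≤ ((2r−5)/(2r−3))·n. -/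
open Finset

/-- In a `T_{j+2}`-free digraph induced on `S`, some vertex has small out-degree in `S`. -/
lemma minOutDeg {V : Type*} [Fintype V] [DecidableEq V] (A : V → V → Prop) [DecidableRel A]
    (hirr : ∀ v, ¬ A v v) :
    ∀ (j : ℕ) (S : Finset V), S.Nonempty →
      (¬ ∃ g : Fin (j + 2) → V, Function.Injective g ∧ (∀ i, g i ∈ S) ∧
        ∀ i k : Fin (j + 2), i < k → A (g i) (g k)) →
      ∃ y ∈ S, (j + 1) * (S.filter (fun w => A y w)).card ≤ j * S.card := by
  intro j
  induction j with
  | zero =>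
    intro S hS hfree
    by_contra hcon
    push_neg at hcon
    obtain ⟨v, hv⟩ := hS
    have h0 := hcon v hv
    have hne : (S.filter (fun w => A v w)).Nonempty := by
      rw [← Finset.card_pos]; omega
    obtain ⟨x, hx⟩ := hne
    rw [mem_filter] at hx
    apply hfree
    refine ⟨fun i => if (i : ℕ) = 0 then v else x, ?_, ?_, ?_⟩
    · intro a b hab
      simp only at hab
      split_ifs at hab with ha hb hb
      · exact Fin.ext (by omega)
      · exact absurd hx.2 (fun h => hirr v (hab ▸ h))
      · exact absurd hx.2 (fun h => hirr v (hab ▸ h))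
      · have ha2 := a.isLt; have hb2 := b.isLt
        exact Fin.ext (by omega)
    · intro i
      simp only
      split_ifs
      · exact hv
      · exact hx.1
    · intro i k hik
      have hik' : (i : ℕ) < (k : ℕ) := hik
      have hk2 := k.isLt
      simp only
      split_ifs with hi hk hk
      · omega
      · exact hx.2
      · omega
      · omega
  | succ j ih =>
    intro S hS hfree
    by_contra hcon
    push_neg at hcon
    obtain ⟨v, hv⟩ := hS
    set N := S.filter (fun w => A v w) with hNdef
    have hNsub : N ⊆ S := filter_subset _ _
    have hvdeg : (j + 1) * S.card < (j + 1 + 1) * N.card := by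
      have := hcon v hv; rw [← hNdef] at this; exact this
    have hNS : N.card ≤ S.card := card_le_card hNsub
    have hNne : N.Nonempty := by
      rw [← Finset.card_pos]
      by_contra hc
      push_neg at hc
      interval_cases h : N.card <;> omega
    have hdegN : ∀ u ∈ N, j * N.card < (j + 1) * (N.filter (fun w => A u w)).card := by
      intro u hu
      have h1 := hcon u (hNsub hu)
      have h3 : (S.filter (fun w => A u w)).card + N.card
          ≤ (N.filter (fun w => A u w)).card + S.card := by
        have hsub : S.filter (fun w => A u w) ⊆ N.filter (fun w => A u w) ∪ (S \ N) := by
          intro x hx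
          rw [mem_filter] at hx
          by_cases hxN : x ∈ N
          · exact mem_union_left _ (mem_filter.mpr ⟨hxN, hx.2⟩)
          · exact mem_union_right _ (mem_sdiff.mpr ⟨hx.1, hxN⟩)
        have := (card_le_card hsub).trans (card_union_le _ _)
        have hsd : (S \ N).card = S.card - N.card := card_sdiff_of_subset hNsub
        omega
      by_contra hc
      push_neg at hc
      have H := mul_le_mul_right h3 (j + 1)
      have i1 : (j + 1) * (S.filter (fun w => A u w)).card + N.card ≤ (j + 1) * S.card := by
        nlinarith [H, hc]
      have i2 : N.card < (S.filter (fun w => A u w)).card := by nlinarith [i1, h1]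
      have i5 : (j + 1) * (S.filter (fun w => A u w)).card
          < (j + 1) * N.card := by nlinarith [i1, hvdeg]
      have := Nat.lt_of_mul_lt_mul_left i5
      omega
    have hfreeN : ¬ ∃ g : Fin (j + 2) → V, Function.Injective g ∧ (∀ i, g i ∈ N) ∧
        ∀ i k : Fin (j + 2), i < k → A (g i) (g k) := by
      rintro ⟨g, hg1, hg2, hg3⟩
      apply hfree
      refine ⟨fun i => if h : (i : ℕ) = 0 then v
        else g ⟨(i : ℕ) - 1, by have := i.isLt; omega⟩, ?_, ?_, ?_⟩
      · intro a b hab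
        simp only at hab
        split_ifs at hab with ha hb hb
        · exact Fin.ext (by omega)
        · exact absurd ((mem_filter.mp (hg2 _)).2) (fun h => hirr v (hab ▸ h))
        · exact absurd ((mem_filter.mp (hg2 _)).2) (fun h => hirr v (hab.symm ▸ h))
        · have := hg1 hab
          have h2 := Fin.mk.injEq _ _ _ _ ▸ this
          have ha2 := a.isLt; have hb2 := b.isLt
          exact Fin.ext (by simp only [Fin.mk.injEq] at this; omega)
      · intro i
        simp only
        split_ifs
        · exact hv
        · exact hNsub (hg2 _)
      · intro i k hik
        have hik' : (i : ℕ) < (k : ℕ) := hik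
        simp only
        split_ifs with hi hk hk
        · omega
        · exact (mem_filter.mp (hg2 _)).2
        · omega
        · refine hg3 _ _ ?_
          have hk2 := k.isLt
          exact Fin.mk_lt_mk.mpr (by omega)
    obtain ⟨y, hyN, hy⟩ := ih N hNne hfreeN
    exact absurd hy (not_le.mpr (hdegN y hyN))

set_option maxHeartbeats 2000000

/-- Let `r ≥ 3` and let `D` be a `T_r`-free digraph on `n` vertices with a set `U` of
`r` vertices such that every vertex of `D` is dominated by at most `r−1` vertices of
`U`, and such that the set `Y` of vertices dominated by exactly `r−1` vertices of `U`
induces no transitive tournament on `r−2` vertices.  Then `δ⁺(D) ≤ ((2r−5)/(2r−3))·n`. -/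
theorem stmt_18 {V : Type*} [Fintype V] (n r : ℕ) (hn : Fintype.card V = n) (hr : 3 ≤ r)
    (A : V → V → Prop) (hirr : ∀ v, ¬ A v v)
    (hTfree : ¬ ∃ f : Fin r → V, Function.Injective f ∧
        ∀ i j : Fin r, i < j → A (f i) (f j))
    (U : Finset V) (hU : U.card = r)
    (hdom : ∀ v : V, Nat.card {u : U // A u.1 v} ≤ r - 1)
    (hYfree : ¬ ∃ g : Fin (r - 2) → V, Function.Injective g ∧
        (∀ i, Nat.card {u : U // A u.1 (g i)} = r - 1) ∧
        ∀ i j : Fin (r - 2), i < j → A (g i) (g j)) :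
    ∃ u : V, (Nat.card {w : V // A u w} : ℝ) ≤ (2 * r - 5) / (2 * r - 3) * n := by
  classical
  have hout : ∀ v : V, Nat.card {w : V // A v w}
      = (univ.filter (fun w => A v w)).card := by
    intro v
    rw [Nat.card_eq_fintype_card, Fintype.card_subtype]
  have hdomc : ∀ v : V, Nat.card {u : U // A u.1 v}
      = (U.filter (fun u => A u v)).card := by
    intro v
    rw [Nat.card_congr (Equiv.subtypeSubtypeEquivSubtypeInter (· ∈ U) (fun u => A u v)),
      Nat.card_eq_fintype_card, Fintype.card_subtype]
    congr 1
    ext x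
    simp [Finset.mem_filter]
  set Y : Finset V := univ.filter (fun v => (U.filter (fun u => A u v)).card = r - 1)
    with hYdef
  set yc := Y.card with hyc
  set zc := (univ.filter (fun v => ¬ (U.filter (fun u => A u v)).card = r - 1)).card
    with hzc
  clear_value yc zc
  have hyzn : yc + zc = n := by
    rw [hyc, hzc, hYdef, Finset.card_filter_add_card_filter_not, Finset.card_univ, hn]
  have hsum : ∑ u ∈ U, (univ.filter (fun w => A u w)).card
      = ∑ v ∈ univ, (U.filter (fun u => A u v)).card := by
    simp only [Finset.card_filter]
    exact Finset.sum_comm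
  have hdombound : ∀ v : V, (U.filter (fun u => A u v)).card ≤ r - 1 := by
    intro v; rw [← hdomc]; exact hdom v
  have hsumbound : ∑ v ∈ univ, (U.filter (fun u => A u v)).card
      ≤ (r - 1) * yc + (r - 2) * zc := by
    rw [← Finset.sum_filter_add_sum_filter_not univ
      (fun v => (U.filter (fun u => A u v)).card = r - 1)]
    gcongr ?_ + ?_
    · calc ∑ v ∈ univ.filter (fun v => (U.filter (fun u => A u v)).card = r - 1),
          (U.filter (fun u => A u v)).card
          ≤ (univ.filter (fun v => (U.filter (fun u => A u v)).card = r - 1)).card • (r - 1) := by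
            apply Finset.sum_le_card_nsmul
            intro v hv
            exact le_of_eq (Finset.mem_filter.mp hv).2
        _ = (r - 1) * yc := by rw [smul_eq_mul, hyc, hYdef, mul_comm]
    · calc ∑ v ∈ univ.filter (fun v => ¬ (U.filter (fun u => A u v)).card = r - 1),
          (U.filter (fun u => A u v)).card
          ≤ (univ.filter (fun v => ¬ (U.filter (fun u => A u v)).card = r - 1)).card • (r - 2) := by
            apply Finset.sum_le_card_nsmul
            intro v hv
            have h1 := hdombound v
            have h2 := (Finset.mem_filter.mp hv).2
            omega
        _ = (r - 2) * zc := by rw [smul_eq_mul, hzc, mul_comm]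
  have hUne : U.Nonempty := by rw [← Finset.card_pos, hU]; omega
  obtain ⟨u₀, hu₀U, hu₀min⟩ := Finset.exists_min_image U
    (fun u => (univ.filter (fun w => A u w)).card) hUne
  set d0 := (univ.filter (fun w => A u₀ w)).card with hd0
  clear_value d0
  have hmin : r * d0 ≤ (r - 1) * yc + (r - 2) * zc := by
    calc r * d0 = U.card • d0 := by rw [hU, smul_eq_mul]
    _ ≤ ∑ u ∈ U, (univ.filter (fun w => A u w)).card :=
        Finset.card_nsmul_le_sum U _ _ hu₀min
    _ ≤ _ := by rw [hsum]; exact hsumbound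
  by_cases hYe : Y = ∅
  · -- Y is empty
    have hyc0 : yc = 0 := by rw [hyc, hYe]; simp
    obtain ⟨j, rfl⟩ : ∃ j, r = j + 3 := ⟨r - 3, by omega⟩
    have e1 : j + 3 - 1 = j + 2 := by omega
    have e2 : j + 3 - 2 = j + 1 := by omega
    rw [e1, e2, hyc0, mul_zero, zero_add] at hmin
    have hzn : zc = n := by omega
    rw [hzn] at hmin
    -- hmin : (j+3) * d0 ≤ (j+1) * n
    refine ⟨u₀, ?_⟩
    rw [hout u₀, ← hd0]
    have hj : (0:ℝ) ≤ (j : ℝ) := Nat.cast_nonneg j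
    have hn0 : (0:ℝ) ≤ (n : ℝ) := Nat.cast_nonneg n
    have hd : (0:ℝ) ≤ (d0 : ℝ) := Nat.cast_nonneg d0
    have key : ((j:ℝ) + 3) * d0 ≤ ((j:ℝ) + 1) * n := by exact_mod_cast hmin
    have hpos : (0:ℝ) < 2 * ((j:ℝ) + 3) - 3 := by linarith
    push_cast
    rw [div_mul_eq_mul_div, le_div_iff₀ hpos]
    nlinarith [mul_le_mul_of_nonneg_left key (show (0:ℝ) ≤ 2*(j:ℝ)+3 by linarith),
      mul_nonneg hj hn0, mul_nonneg hj hd]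
  · -- Y nonempty
    have hYne : Y.Nonempty := Finset.nonempty_of_ne_empty hYe
    have hr4 : 4 ≤ r := by
      by_contra hcon
      have hr3 : r = 3 := by omega
      subst hr3
      obtain ⟨y, hy⟩ := hYne
      apply hYfree
      refine ⟨fun _ => y, ?_, ?_, ?_⟩
      · intro a b _
        have h1 := a.isLt; have h2 := b.isLt
        exact Fin.ext (by omega)
      · intro i
        rw [hdomc]
        exact (Finset.mem_filter.mp hy).2
      · intro i k hik
        have h1 := i.isLt; have h2 := k.isLt
        have := Fin.lt_def.mp hik
        omega
    obtain ⟨j, rfl⟩ : ∃ j, r = j + 4 := ⟨r - 4, by omega⟩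
    have e0 : j + 4 - 2 = j + 2 := by omega
    have e1 : j + 4 - 1 = j + 3 := by omega
    rw [e0, e1] at hYfree
    rw [e1] at hYdef
    rw [e1, e0] at hmin
    have hfreeY : ¬ ∃ g : Fin (j + 2) → V, Function.Injective g ∧ (∀ i, g i ∈ Y) ∧
        ∀ i k : Fin (j + 2), i < k → A (g i) (g k) := by
      rintro ⟨g, hg1, hg2, hg3⟩
      apply hYfree
      refine ⟨g, hg1, ?_, hg3⟩
      intro i
      rw [hdomc]
      have := hg2 i
      rw [hYdef, Finset.mem_filter] at this
      exact this.2
    obtain ⟨y, hyY, hy⟩ := minOutDeg A hirr j Y hYne hfreeY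
    set dy := (univ.filter (fun w => A y w)).card with hdy
    clear_value dy
    have hsplit : dy ≤ (Y.filter (fun w => A y w)).card + zc := by
      have hsub : univ.filter (fun w => A y w)
          ⊆ Y.filter (fun w => A y w)
            ∪ univ.filter (fun v => ¬ (U.filter (fun u => A u v)).card = j + 4 - 1) := by
        intro x hx
        rw [mem_filter] at hx
        by_cases hxY : (U.filter (fun u => A u x)).card = j + 3
        · refine mem_union_left _ (mem_filter.mpr ⟨?_, hx.2⟩)
          rw [hYdef, mem_filter]; exact ⟨mem_univ x, hxY⟩
        · refine mem_union_right _ (mem_filter.mpr ⟨mem_univ x, ?_⟩)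
          rw [e1]; exact hxY
      have h2 := Finset.card_union_le (Y.filter (fun w => A y w))
        (univ.filter (fun v => ¬ (U.filter (fun u => A u v)).card = j + 4 - 1))
      rw [hdy, hzc]
      exact le_trans (card_le_card hsub) h2
    rw [← hyc] at hy
    obtain ⟨ey, hey⟩ : ∃ m, (Y.filter (fun w => A y w)).card = m := ⟨_, rfl⟩
    rw [hey] at hy hsplit
    have F2 : (j + 1) * dy ≤ j * yc + (j + 1) * zc := by
      have h1 := mul_le_mul_right hsplit (j + 1)
      nlinarith [hy, h1]
    have hj : (0:ℝ) ≤ (j : ℝ) := Nat.cast_nonneg j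
    have key : ∀ d : ℕ, (j + 4) * d ≤ (j + 3) * yc + (j + 2) * zc →
        (j + 1) * d ≤ j * yc + (j + 1) * zc →
        (d : ℝ) ≤ (2 * ((j:ℝ) + 4) - 5) / (2 * ((j:ℝ) + 4) - 3) * n := by
      intro d h1 h2
      have hk : (2*j+5) * d ≤ (2*j+3) * (yc + zc) := by nlinarith [h1, h2]
      have hn' : (yc:ℝ) + zc = n := by exact_mod_cast hyzn
      have hpos : (0:ℝ) < 2 * ((j:ℝ) + 4) - 3 := by linarith
      rw [div_mul_eq_mul_div, le_div_iff₀ hpos, ← hn']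
      have hk' : (2*(j:ℝ)+5) * d ≤ (2*(j:ℝ)+3) * ((yc:ℝ) + zc) := by exact_mod_cast hk
      nlinarith [hk']
    rcases le_total d0 dy with hle | hle
    · refine ⟨u₀, ?_⟩
      rw [hout u₀, ← hd0]
      push_cast
      refine key d0 hmin ?_
      calc (j + 1) * d0 ≤ (j + 1) * dy := mul_le_mul_right hle _
        _ ≤ _ := F2
    · refine ⟨y, ?_⟩
      rw [hout y, ← hdy]
      push_cast
      refine key dy ?_ F2
      calc (j + 4) * dy ≤ (j + 4) * d0 := mul_le_mul_right hle _
        _ ≤ _ := hmin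
end
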